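/- arXiv:1507.03050 — 2 statements merged into one kernel-verified Lean document; each statement's English description precedes it below -/
import Mathlib

section
/- Let G be a locally finite connected graph with quadratic growth, i.e., there is a constant c > 0 such that the growth function satisfies β(n) ≤ c·n^2 for all n ≥ 1. Then G satisfies the constant containment property: there exists a positive integer f such that G has the {f}-containment property for the constant sequence f. -/
open SimpleGraph

namespace Firefighter

variable {V : Type*}

/-- The set of vertices on fire at time `n`, starting from initial fire `X0`, with fire spreading
along paths of length at most `r` avoiding the protected sets `W 1, ..., W n`. -/
def fireSet (G : SimpleGraph V) (r : ℕ) (X0 : Set V) (W : ℕ → Set V) : ℕ → Set V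
  | 0 => X0
  | n + 1 => {v | ∃ u ∈ fireSet G r X0 W n, ∃ p : G.Walk u v, p.length ≤ r ∧
      ∀ w ∈ p.support, ∀ i, 1 ≤ i → i ≤ n + 1 → w ∉ W i}

/-- `W` is an `(f, r)`-containment strategy for the initial fire `X0` in `G`. -/
def IsContainmentStrategy (G : SimpleGraph V) (r : ℕ) (f : ℕ → ℕ)
    (X0 : Set V) (W : ℕ → Set V) : Prop :=
  (∀ n, 1 ≤ n → (W n).Finite ∧ (W n).ncard ≤ f n) ∧
  (∀ n, Disjoint (fireSet G r X0 W n) (W (n + 1))) ∧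
  (∃ N, 0 < N ∧ ∀ n, N ≤ n → fireSet G r X0 W n = fireSet G r X0 W N)

/-- `G` has the `(f, r)`-containment property. -/
def HasContainmentProperty (G : SimpleGraph V) (r : ℕ) (f : ℕ → ℕ) : Prop :=
  ∀ X0 : Set V, X0.Finite → ∃ W : ℕ → Set V, IsContainmentStrategy G r f X0 W

/-- A graph is locally finite if every vertex has finitely many neighbors. -/
def LocallyFiniteGraph (G : SimpleGraph V) : Prop := ∀ v, (G.neighborSet v).Finite

/-- The ball of radius `n` about the vertex `g0` (in the combinatorial metric). -/
def ball (G : SimpleGraph V) (g0 : V) (n : ℕ) : Set V :=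
  {v | G.Reachable g0 v ∧ G.dist g0 v ≤ n}

/-- The sphere of radius `n` about the vertex `g0` (in the combinatorial metric). -/
def sphere (G : SimpleGraph V) (g0 : V) (n : ℕ) : Set V :=
  {v | G.Reachable g0 v ∧ G.dist g0 v = n}

/-- For `T` a subset of the sphere of radius `n`, `nextAdj G g0 n T` is the set `T*` of vertices
of the sphere of radius `n+1` adjacent to at least one vertex of `T`. -/
def nextAdj (G : SimpleGraph V) (g0 : V) (n : ℕ) (T : Set V) : Set V :=
  {v ∈ sphere G g0 (n + 1) | ∃ u ∈ T, G.Adj u v}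

/-- A graph has bounded degree if there is a uniform finite bound on vertex degrees. -/
def BoundedDegree (G : SimpleGraph V) : Prop :=
  ∃ D : ℕ, ∀ v, (G.neighborSet v).Finite ∧ (G.neighborSet v).ncard ≤ D

/-- Two graphs are quasi-isometric. -/
def QuasiIsometric {V' : Type*} (G : SimpleGraph V) (H : SimpleGraph V') : Prop :=
  ∃ c : ℕ, 1 ≤ c ∧ ∃ (φ : V → V') (ψ : V' → V),
    (∀ g1 g2, H.dist (φ g1) (φ g2) ≤ c * G.dist g1 g2 + c) ∧
    (∀ h1 h2, G.dist (ψ h1) (ψ h2) ≤ c * H.dist h1 h2 + c) ∧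
    (∀ g, G.dist g (ψ (φ g)) ≤ c) ∧
    (∀ h, H.dist h (φ (ψ h)) ≤ c)

/-- `f ≼ g` : there is `c > 0` with `f n ≤ c * g (c*n + c) + c` for all `n ≥ c`. -/
def Preceq (f g : ℕ → ℕ) : Prop :=
  ∃ c : ℕ, 0 < c ∧ ∀ n, c ≤ n → f n ≤ c * g (c * n + c) + c

/-- `f` and `g` have equivalent asymptotic growth. -/
def AsympEquiv (f g : ℕ → ℕ) : Prop := Preceq f g ∧ Preceq g f

/-- The ball of radius `n` about a set `X` of vertices. -/
def ballSet (G : SimpleGraph V) (X : Set V) (n : ℕ) : Set V :=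
  {v | ∃ u ∈ X, ∃ p : G.Walk u v, p.length ≤ n}

section Aux

variable {G : SimpleGraph V} {g0 : V}

lemma sphere_subset_ball {n : ℕ} : sphere G g0 n ⊆ ball G g0 n :=
  fun _ hv => ⟨hv.1, hv.2.le⟩

lemma ball_mono {a b : ℕ} (h : a ≤ b) : ball G g0 a ⊆ ball G g0 b :=
  fun _ hv => ⟨hv.1, hv.2.trans h⟩

lemma walk_exists_adj_concat {a b : V} (p : G.Walk a b) (h : p.length ≠ 0) :
    ∃ u, G.Adj u b ∧ ∃ q : G.Walk a u, q.length + 1 = p.length := by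
  induction p with
  | nil => simp at h
  | @cons x y z h' q ih =>
    by_cases hq : q.length = 0
    · obtain rfl := q.eq_of_length_eq_zero hq
      exact ⟨x, h', SimpleGraph.Walk.nil, by simp [hq]⟩
    · obtain ⟨u, hu, q', hq'⟩ := ih hq
      exact ⟨u, hu, SimpleGraph.Walk.cons h' q', by simp [SimpleGraph.Walk.length_cons, hq']⟩

lemma ball_finite (hlf : LocallyFiniteGraph G) (g0 : V) :
    ∀ n, (ball G g0 n).Finite := by
  intro n
  induction n with
  | zero =>
    apply Set.Finite.subset (Set.finite_singleton g0)
    rintro v ⟨hr, hd⟩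
    exact Set.mem_singleton_iff.mpr (hr.dist_eq_zero_iff.mp (Nat.le_zero.mp hd)).symm
  | succ n ih =>
    apply Set.Finite.subset (ih.union (ih.biUnion (fun u _ => hlf u)))
    rintro v ⟨hr, hd⟩
    rcases le_or_gt (G.dist g0 v) n with h | h
    · exact Or.inl ⟨hr, h⟩
    · obtain ⟨p, hp⟩ := hr.exists_walk_length_eq_dist
      have hne : p.length ≠ 0 := by omega
      obtain ⟨u, hu, q, hq⟩ := walk_exists_adj_concat p hne
      refine Or.inr (Set.mem_biUnion (x := u) ⟨⟨q⟩, ?_⟩ ((G.mem_neighborSet u v).mpr hu))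
      have := SimpleGraph.dist_le q
      omega

lemma ball_ncard_step (hfin : ∀ n, (ball G g0 n).Finite) (n : ℕ) :
    (ball G g0 n).ncard + (sphere G g0 (n+1)).ncard ≤ (ball G g0 (n+1)).ncard := by
  have hdisj : Disjoint (ball G g0 n) (sphere G g0 (n+1)) := by
    rw [Set.disjoint_left]; rintro v ⟨_, hd⟩ ⟨_, hd'⟩; omega
  rw [← Set.ncard_union_eq hdisj (hfin n) ((hfin (n+1)).subset sphere_subset_ball)]
  exact Set.ncard_le_ncard (Set.union_subset (ball_mono (Nat.le_succ n)) sphere_subset_ball)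
    (hfin (n+1))

lemma exists_sparse_sphere (hfin : ∀ n, (ball G g0 n).Finite) {c : ℝ} (hc : 0 < c)
    (hgrowth : ∀ n : ℕ, 1 ≤ n → ((ball G g0 n).ncard : ℝ) ≤ c * (n : ℝ) ^ 2)
    (M : ℕ) (hM : 1 ≤ M) :
    ∃ m, M + 1 ≤ m ∧ m ≤ 2 * M ∧ ((sphere G g0 m).ncard : ℝ) ≤ 4 * c * M := by
  by_contra hcon
  push_neg at hcon
  have key : ∀ k, 1 ≤ k → k ≤ M →
      (k : ℝ) * (4 * c * M) < ((ball G g0 (M + k)).ncard : ℝ) := by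
    intro k
    induction k with
    | zero => omega
    | succ k ih =>
      intro _ hk
      rw [show M + (k+1) = M + k + 1 by omega]
      have h2 := hcon (M + k + 1) (by omega) (by omega)
      have h3 := ball_ncard_step hfin (M + k)
      have h3' : ((ball G g0 (M+k)).ncard : ℝ) + ((sphere G g0 (M+k+1)).ncard : ℝ)
          ≤ ((ball G g0 (M+k+1)).ncard : ℝ) := by exact_mod_cast h3
      rcases Nat.eq_zero_or_pos k with rfl | hk0
      · have hnn : (0:ℝ) ≤ ((ball G g0 (M+0)).ncard : ℝ) := Nat.cast_nonneg _
        push_cast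
        push_cast at h3' h2
        nlinarith
      · have h1 := ih hk0 (by omega)
        push_cast
        push_cast at h3' h2 h1
        nlinarith
  have hfinal := key M hM le_rfl
  have hg := hgrowth (2 * M) (by omega)
  have hfin2 : ((ball G g0 (M + M)).ncard : ℝ) ≤ c * ((2 * M : ℕ) : ℝ) ^ 2 := by
    rw [show M + M = 2 * M by ring]; exact hg
  push_cast at hfin2 hfinal
  nlinarith

end Aux

/-- a locally finite connected graph with quadratic growth satisfies the constant
containment property. -/
theorem stmt1 {V : Type*} (G : SimpleGraph V) (hconn : G.Connected)
    (hlf : LocallyFiniteGraph G) (g0 : V) (c : ℝ) (hc : 0 < c)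
    (hgrowth : ∀ n : ℕ, 1 ≤ n → ((ball G g0 n).ncard : ℝ) ≤ c * (n : ℝ) ^ 2) :
    ∃ f : ℕ, 0 < f ∧ HasContainmentProperty G 1 (fun _ => f) := by
  classical
  have hfin : ∀ n, (ball G g0 n).Finite := ball_finite hlf g0
  refine ⟨⌈8 * c⌉₊ + 1, Nat.succ_pos _, ?_⟩
  set f : ℕ := ⌈8 * c⌉₊ + 1 with hfdef
  have hf1 : 1 ≤ f := Nat.succ_le_succ (Nat.zero_le _)
  have hfc : 8 * c ≤ (f : ℝ) := by
    calc 8 * c ≤ (⌈8 * c⌉₊ : ℝ) := Nat.le_ceil _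
    _ ≤ (f : ℝ) := by exact_mod_cast Nat.le_succ _
  intro X0 hX0
  set r0 : ℕ := hX0.toFinset.sup (G.dist g0) with hr0def
  have hX0r : ∀ v ∈ X0, G.dist g0 v ≤ r0 :=
    fun v hv => Finset.le_sup (hX0.mem_toFinset.mpr hv)
  set M : ℕ := 2 * r0 + 2 with hMdef
  obtain ⟨m, hm1, hm2, hmcard⟩ := exists_sparse_sphere hfin hc hgrowth M (by omega)
  have hSfin : (sphere G g0 m).Finite := (hfin m).subset sphere_subset_ball
  set s : Finset V := hSfin.toFinset with hsdef
  have hscard : s.card = (sphere G g0 m).ncard :=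
    (Set.ncard_eq_toFinset_card _ hSfin).symm
  set e := Fintype.equivFin ↥s with hedef
  set idx : V → ℕ := fun v => if h : v ∈ s then (e ⟨v, h⟩ : ℕ) else 0 with hidxdef
  have hidx_lt : ∀ v ∈ sphere G g0 m, idx v < (sphere G g0 m).ncard := by
    intro v hv
    have hvs : v ∈ s := hSfin.mem_toFinset.mpr hv
    simp only [hidxdef, dif_pos hvs]
    have h := (e ⟨v, hvs⟩).isLt
    have h2 : Fintype.card { x // x ∈ s } = (sphere G g0 m).ncard := by
      rw [Fintype.card_coe, hscard]
    exact lt_of_lt_of_eq h h2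
  have hidx_inj : Set.InjOn idx (sphere G g0 m) := by
    intro v hv w hw h
    have hvs : v ∈ s := hSfin.mem_toFinset.mpr hv
    have hws : w ∈ s := hSfin.mem_toFinset.mpr hw
    simp only [hidxdef, dif_pos hvs, dif_pos hws] at h
    have h2 := e.injective (Fin.val_injective h)
    exact congrArg Subtype.val h2
  set W : ℕ → Set V := fun i => {v | v ∈ sphere G g0 m ∧ f * (i - 1) ≤ idx v ∧ idx v < f * i}
    with hWdef
  have hWsub : ∀ i, W i ⊆ sphere G g0 m := fun i v hv => hv.1
  have hWfin : ∀ i, (W i).Finite := fun i => hSfin.subset (hWsub i)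
  have hWcard : ∀ i, (W i).ncard ≤ f := by
    intro i
    have h1 : (W i).ncard ≤ (Set.Ico (f * (i-1)) (f * i)).ncard := by
      apply Set.ncard_le_ncard_of_injOn idx
      · rintro v ⟨_, h1, h2⟩; exact ⟨h1, h2⟩
      · exact hidx_inj.mono (hWsub i)
    rw [← Finset.coe_Ico, Set.ncard_coe_finset, Nat.card_Ico] at h1
    refine h1.trans ?_
    cases i with
    | zero => simp
    | succ j =>
      have h2 : f * (j + 1) - f * (j + 1 - 1) = f := by
        simp only [Nat.add_sub_cancel, Nat.mul_succ, Nat.add_sub_cancel_left]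
      exact le_of_eq h2
  set T : ℕ := m - r0 with hTdef
  have hScard_le : (sphere G g0 m).ncard ≤ f * T := by
    have h1 : ((sphere G g0 m).ncard : ℝ) ≤ (f : ℝ) * (T : ℝ) := by
      calc ((sphere G g0 m).ncard : ℝ) ≤ 4 * c * M := hmcard
      _ = 8 * c * ((r0 + 1 : ℕ) : ℝ) := by rw [hMdef]; push_cast; ring
      _ ≤ (f : ℝ) * ((r0 + 1 : ℕ) : ℝ) := by
          apply mul_le_mul_of_nonneg_right hfc (by positivity)
      _ ≤ (f : ℝ) * (T : ℝ) := by
          apply mul_le_mul_of_nonneg_left _ (by positivity)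
          exact_mod_cast (show r0 + 1 ≤ T by omega)
    exact_mod_cast h1
  have hcover : ∀ v ∈ sphere G g0 m, ∃ i, 1 ≤ i ∧ i ≤ T ∧ v ∈ W i := by
    intro v hv
    have hf0 : 0 < f := hf1
    have hmod := Nat.mod_lt (idx v) hf0
    have hub : idx v < f * (idx v / f) + f := by
      conv_lhs => rw [← Nat.div_add_mod (idx v) f]
      exact Nat.add_lt_add_left hmod _
    refine ⟨idx v / f + 1, Nat.succ_le_succ (Nat.zero_le _), ?_, hv, ?_, ?_⟩
    · have hlt : idx v < f * T := lt_of_lt_of_le (hidx_lt v hv) hScard_le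
      have hq : idx v / f < T := by
        rw [Nat.div_lt_iff_lt_mul hf0, Nat.mul_comm T f]
        exact hlt
      omega
    · simp only [Nat.add_sub_cancel]
      rw [Nat.mul_comm]
      exact Nat.div_mul_le_self _ _
    · rw [Nat.mul_succ]
      exact hub
  have hkey : ∀ n, ∀ v ∈ fireSet G 1 X0 W n,
      G.Reachable g0 v ∧ G.dist g0 v + 1 ≤ m ∧ G.dist g0 v ≤ r0 + n := by
    intro n
    induction n with
    | zero =>
      intro v hv
      simp only [fireSet] at hv
      exact ⟨hconn.preconnected g0 v, by have := hX0r v hv; omega,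
        by have := hX0r v hv; omega⟩
    | succ n ih =>
      intro v hv
      simp only [fireSet, Set.mem_setOf_eq] at hv
      obtain ⟨u, hu, p, hlen, havoid⟩ := hv
      obtain ⟨hru, hdu1, hdu2⟩ := ih u hu
      rcases Nat.eq_zero_or_pos p.length with h0 | h1
      · obtain rfl := p.eq_of_length_eq_zero h0
        exact ⟨hru, hdu1, by omega⟩
      · have hlen1 : p.length = 1 := by omega
        have hadj : G.Adj u v := p.adj_of_length_eq_one hlen1
        have hrv : G.Reachable g0 v := hru.trans ⟨hadj.toWalk⟩
        have hduv : G.dist u v = 1 := SimpleGraph.dist_eq_one_iff_adj.mpr hadj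
        have htri : G.dist g0 v ≤ G.dist g0 u + G.dist u v := hconn.dist_triangle
        rw [hduv] at htri
        refine ⟨hrv, ?_, by omega⟩
        by_contra hbad
        push_neg at hbad
        have hdvm : G.dist g0 v = m := by omega
        obtain ⟨i, hi1, hi2, hiW⟩ := hcover v ⟨hrv, hdvm⟩
        exact havoid v p.end_mem_support i hi1 (by omega) hiW
  have hdisjW : ∀ n i, Disjoint (fireSet G 1 X0 W n) (W i) := by
    intro n i
    rw [Set.disjoint_left]
    intro v hv hvW
    have h1 := (hkey n v hv).2.1
    have h2 := (hWsub i hvW).2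
    omega
  have hmono : ∀ n, fireSet G 1 X0 W n ⊆ fireSet G 1 X0 W (n+1) := by
    intro n v hv
    simp only [fireSet, Set.mem_setOf_eq]
    refine ⟨v, hv, SimpleGraph.Walk.nil, by simp, ?_⟩
    intro w hw i _ _ hwW
    simp only [SimpleGraph.Walk.support_nil, List.mem_singleton] at hw
    subst hw
    exact (Set.disjoint_left.mp (hdisjW n i)) hv hwW
  have hmono' : Monotone (fireSet G 1 X0 W) := monotone_nat_of_le_succ hmono
  have hYsub : ∀ n, fireSet G 1 X0 W n ⊆ ball G g0 m := fun n v hv =>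
    ⟨(hkey n v hv).1, by have := (hkey n v hv).2.1; omega⟩
  set Y : Set V := ⋃ n, fireSet G 1 X0 W n with hYdef
  have hYfin : Y.Finite := (hfin m).subset (Set.iUnion_subset hYsub)
  set gfun : V → ℕ := fun v => if h : ∃ n, v ∈ fireSet G 1 X0 W n then h.choose else 0
    with hgdef
  set N0 : ℕ := hYfin.toFinset.sup gfun + 1 with hN0
  have hstab : ∀ n, N0 ≤ n → fireSet G 1 X0 W n = Y := by
    intro n hn
    apply Set.Subset.antisymm (Set.subset_iUnion _ n)
    intro v hv
    have hex : ∃ k, v ∈ fireSet G 1 X0 W k := Set.mem_iUnion.mp hv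
    have hv' : v ∈ fireSet G 1 X0 W (gfun v) := by
      simp only [hgdef, dif_pos hex]; exact hex.choose_spec
    have hle : gfun v ≤ N0 :=
      le_trans (Finset.le_sup (hYfin.mem_toFinset.mpr hv)) (Nat.le_succ _)
    exact hmono' (le_trans hle hn) hv'
  refine ⟨W, fun n _ => ⟨hWfin n, hWcard n⟩, fun n => hdisjW n (n+1),
    ⟨N0, by omega, fun n hn => by rw [hstab n hn, hstab N0 le_rfl]⟩⟩

end Firefighter
end

section
/- Let G be a graph with bounded degree and d ≥ 0. Then G has the O(n^d)-containment property if and only if, for every integer k ≥ 1, the graph G(k) has the O(n^d)-containment property, where G(k) is the graph with the same vertex set as G in which two vertices are adjacent if and only if their distance in G is at most k (and at least 1). -/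
open SimpleGraph

namespace Firefighter

variable {V : Type*}

/-- The graph `G(k)`: same vertices as `G`, two vertices adjacent iff their distance in `G` is
at least `1` and at most `k`. -/
def powerGraph (G : SimpleGraph V) (k : ℕ) : SimpleGraph V where
  Adj u v := u ≠ v ∧ G.Reachable u v ∧ G.dist u v ≤ k
  symm := by
    constructor
    rintro u v ⟨hne, hr, hd⟩
    exact ⟨hne.symm, hr.symm, by rwa [SimpleGraph.dist_comm]⟩
  loopless := by
    constructor
    rintro v ⟨hne, -, -⟩
    exact hne rfl

end Firefighter

/-! Given a strategy `W` for `G`, one round of the fire in `G(k)` is simulated by `k` rounds of the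
fire in `G`: in round `n` of `G(k)`, protect the `G`-ball of radius `k` around the vertices that
`W` protects during rounds `k(n-1)+1, …, kn` (minus what already burns there). A `G(k)`-edge is a
`G`-walk of length at most `k`; if it meets a vertex protected by then, its endpoint lies in that
ball, and otherwise the `G`-fire crosses it within `k` rounds. Hence the `G(k)`-fire at time `n`
stays inside the `G`-fire at time `kn`, which is eventually constant and finite. With bounded
degree `D`, round `n` costs at most `(D+1)^k · k · f(kn)`, which is `O(n^d)` when `f` is.
The converse is the case `k = 1`, as `G(1) = G`. -/

lemma Set.exists_forall_ge_eq_of_monotone_of_subset_finite {α : Type*} {s : ℕ → Set α}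
    (hs : Monotone s) {T : Set α} (hT : T.Finite) (hsT : ∀ n, s n ⊆ T) :
    ∃ N, ∀ n, N ≤ n → s n = s N := by
  have : Finite T := hT
  let a : ℕ →o Set T := ⟨fun n => Subtype.val ⁻¹' s n, fun _ _ h => Set.preimage_mono (hs h)⟩
  obtain ⟨N, hN⟩ := WellFoundedGT.monotone_chain_condition a
  refine ⟨N, fun n hn => ?_⟩
  have h := (Subtype.preimage_coe_eq_preimage_coe_iff.mp (hN n hn)).symm
  rwa [Set.inter_eq_right.mpr (hsT n), Set.inter_eq_right.mpr (hsT N)] at h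

lemma Set.Finite.ncard_biUnion_le_mul {α β : Type*} {X : Set α} (hX : X.Finite)
    {A : α → Set β} {M : ℕ} (hA : ∀ u ∈ X, (A u).ncard ≤ M) :
    (⋃ u ∈ X, A u).ncard ≤ X.ncard * M := by
  have hXA : (⋃ u ∈ X, A u) = ⋃ u ∈ hX.toFinset, A u := by simp
  rw [hXA, Set.ncard_eq_toFinset_card X hX]
  exact (hX.toFinset.set_ncard_biUnion_le A).trans
    (Finset.sum_le_card_nsmul _ _ _ fun u hu => hA u (hX.mem_toFinset.mp hu))

namespace Firefighter

variable {V : Type*} {G : SimpleGraph V}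

lemma HasContainmentProperty.mono {r : ℕ} {f g : ℕ → ℕ} (h : HasContainmentProperty G r f)
    (hfg : ∀ n, f n ≤ g n) : HasContainmentProperty G r g := by
  intro X0 hX0
  obtain ⟨W, hW, hdisj, hstable⟩ := h X0 hX0
  exact ⟨W, fun n hn => ⟨(hW n hn).1, (hW n hn).2.trans (hfg n)⟩, hdisj, hstable⟩

lemma powerGraph_one (G : SimpleGraph V) : powerGraph G 1 = G := by
  ext u v
  refine ⟨fun ⟨hne, hr, hd⟩ => ?_, fun h => ⟨h.ne, h.reachable, (dist_eq_one_iff_adj.mpr h).le⟩⟩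
  exact dist_eq_one_iff_adj.mp (le_antisymm hd (hr.pos_dist_of_ne hne))

section BallSet

variable {X : Set V}

lemma subset_ballSet (n : ℕ) : X ⊆ ballSet G X n :=
  fun v hv => ⟨v, hv, Walk.nil, Nat.zero_le n⟩

@[simp]
lemma ballSet_zero : ballSet G X 0 = X := by
  refine Set.Subset.antisymm ?_ (subset_ballSet 0)
  rintro v ⟨u, hu, p, hp⟩
  rwa [← Walk.eq_of_length_eq_zero (Nat.le_zero.mp hp)]

lemma ballSet_succ (n : ℕ) : ballSet G X (n + 1) = ballSet G (ballSet G X 1) n := by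
  ext v
  constructor
  · rintro ⟨u, hu, p, hp⟩
    cases p with
    | nil => exact ⟨_, subset_ballSet 1 hu, Walk.nil, Nat.zero_le n⟩
    | cons h q =>
      refine ⟨_, ⟨u, hu, h.toWalk, by simp⟩, q, ?_⟩
      simp only [Walk.length_cons] at hp
      omega
  · rintro ⟨u, ⟨x, hx, p, hp⟩, q, hq⟩
    exact ⟨x, hx, p.append q, by rw [Walk.length_append]; omega⟩

lemma ballSet_one_subset : ballSet G X 1 ⊆ ⋃ u ∈ X, insert u (G.neighborSet u) := by
  rintro v ⟨u, hu, p, hp⟩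
  refine Set.mem_biUnion hu ?_
  rcases Nat.le_one_iff_eq_zero_or_eq_one.mp hp with h0 | h1
  · rw [Walk.eq_of_length_eq_zero h0]
    exact Set.mem_insert _ _
  · exact Set.mem_insert_of_mem _ (Walk.adj_of_length_eq_one h1)

lemma finite_ballSet (hG : LocallyFiniteGraph G) (hX : X.Finite) (n : ℕ) :
    (ballSet G X n).Finite := by
  induction n generalizing X with
  | zero => simpa using hX
  | succ n ih =>
    rw [ballSet_succ]
    exact ih ((hX.biUnion fun u _ => (hG u).insert u).subset ballSet_one_subset)

lemma ncard_ballSet_le {D : ℕ}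
    (hD : ∀ v, (G.neighborSet v).Finite ∧ (G.neighborSet v).ncard ≤ D) (hX : X.Finite) (n : ℕ) :
    (ballSet G X n).ncard ≤ (D + 1) ^ n * X.ncard := by
  induction n generalizing X with
  | zero => simp
  | succ n ih =>
    have hfin : (⋃ u ∈ X, insert u (G.neighborSet u)).Finite :=
      hX.biUnion fun u _ => (hD u).1.insert u
    have hone : (ballSet G X 1).ncard ≤ X.ncard * (D + 1) :=
      (Set.ncard_le_ncard ballSet_one_subset hfin).trans <| hX.ncard_biUnion_le_mul fun u _ =>
        (Set.ncard_insert_le _ _).trans (Nat.add_le_add_right (hD u).2 1)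
    calc (ballSet G X (n + 1)).ncard
        ≤ (D + 1) ^ n * (ballSet G X 1).ncard := by
          rw [ballSet_succ]
          exact ih (hfin.subset ballSet_one_subset)
      _ ≤ (D + 1) ^ n * (X.ncard * (D + 1)) := Nat.mul_le_mul_left _ hone
      _ = (D + 1) ^ (n + 1) * X.ncard := by ring

end BallSet

section FireSet

variable {r : ℕ} {X0 : Set V} {W : ℕ → Set V}

lemma mem_fireSet_succ {n : ℕ} {v : V} : v ∈ fireSet G r X0 W (n + 1) ↔
    ∃ u ∈ fireSet G r X0 W n, ∃ p : G.Walk u v, p.length ≤ r ∧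
      ∀ w ∈ p.support, ∀ i, 1 ≤ i → i ≤ n + 1 → w ∉ W i := Iff.rfl

lemma notMem_of_mem_fireSet (hW : ∀ n, Disjoint (fireSet G r X0 W n) (W (n + 1)))
    {n i : ℕ} {v : V} (hv : v ∈ fireSet G r X0 W n) (hi : 1 ≤ i) (hin : i ≤ n + 1) :
    v ∉ W i := by
  rcases hin.eq_or_lt with rfl | hlt
  · exact Set.disjoint_left.mp (hW n) hv
  · obtain ⟨m, rfl⟩ : ∃ m, n = m + 1 := ⟨n - 1, by omega⟩
    obtain ⟨u, -, p, -, hp⟩ := mem_fireSet_succ.mp hv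
    exact hp v p.end_mem_support i hi (by omega)

lemma fireSet_mono (hW : ∀ n, Disjoint (fireSet G r X0 W n) (W (n + 1))) :
    Monotone (fireSet G r X0 W) := by
  refine monotone_nat_of_le_succ fun n v hv => mem_fireSet_succ.mpr ⟨v, hv, Walk.nil, ?_⟩
  simp only [Walk.length_nil, Walk.support_nil, List.mem_singleton, zero_le, true_and]
  rintro w rfl i hi hin
  exact notMem_of_mem_fireSet hW hv hi hin

lemma fireSet_subset_ballSet (n : ℕ) : fireSet G r X0 W n ⊆ ballSet G X0 (r * n) := by
  induction n with
  | zero => exact subset_ballSet 0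
  | succ n ih =>
    intro v hv
    obtain ⟨u, hu, p, hp, -⟩ := mem_fireSet_succ.mp hv
    obtain ⟨x, hx, q, hq⟩ := ih hu
    exact ⟨x, hx, q.append p, by rw [Walk.length_append, Nat.mul_succ]; omega⟩

lemma finite_fireSet (hG : LocallyFiniteGraph G) (hX0 : X0.Finite) (n : ℕ) :
    (fireSet G r X0 W n).Finite :=
  (finite_ballSet hG hX0 _).subset (fireSet_subset_ballSet n)

lemma mem_fireSet_add_length {u v : V} (p : G.Walk u v) {m : ℕ}
    (hu : u ∈ fireSet G 1 X0 W m)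
    (hp : ∀ w ∈ p.support, ∀ i, 1 ≤ i → i ≤ m + p.length → w ∉ W i) :
    v ∈ fireSet G 1 X0 W (m + p.length) := by
  induction p generalizing m with
  | nil => simpa using hu
  | @cons a b c h q ih =>
    have hb : b ∈ fireSet G 1 X0 W (m + 1) := by
      refine mem_fireSet_succ.mpr ⟨a, hu, h.toWalk, by simp, fun w hw i hi hin => ?_⟩
      have hw' : w ∈ (Walk.cons h q).support := by
        simp only [Walk.support_cons, Walk.support_nil, List.mem_cons,
          List.not_mem_nil, or_false] at hw ⊢
        rcases hw with rfl | rfl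
        · exact Or.inl rfl
        · exact Or.inr q.start_mem_support
      exact hp w hw' i hi (by simp only [Walk.length_cons]; omega)
    have hv := ih hb fun w hw i hi hin =>
      hp w (List.mem_cons_of_mem _ hw) i hi (by simp only [Walk.length_cons]; omega)
    rwa [Walk.length_cons, ← add_assoc, add_right_comm]

lemma exists_fireSet_stable (hW : ∀ n, Disjoint (fireSet G r X0 W n) (W (n + 1)))
    {T : Set V} (hT : T.Finite) (hFT : ∀ n, fireSet G r X0 W n ⊆ T) :
    ∃ N, 0 < N ∧ ∀ n, N ≤ n → fireSet G r X0 W n = fireSet G r X0 W N := by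
  obtain ⟨N, hN⟩ :=
    Set.exists_forall_ge_eq_of_monotone_of_subset_finite (fireSet_mono hW) hT hFT
  exact ⟨N + 1, N.succ_pos, fun n hn => (hN n (by omega)).trans (hN (N + 1) N.le_succ).symm⟩

end FireSet

section PowerGraph

variable {k : ℕ} {X0 : Set V} {W : ℕ → Set V}

lemma exists_mem_Ioc_mul (hk : 0 < k) {j m : ℕ} (hj : 1 ≤ j) (hjm : j ≤ k * m) :
    ∃ i, 1 ≤ i ∧ i ≤ m ∧ j ∈ Finset.Ioc (k * (i - 1)) (k * i) := by
  have hdiv := Nat.div_add_mod (j - 1) k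
  have hmod := Nat.mod_lt (j - 1) hk
  generalize (j - 1) / k = q at hdiv
  have hqm : q < m := Nat.lt_of_mul_lt_mul_left (a := k) (by omega)
  refine ⟨q + 1, by omega, hqm, Finset.mem_Ioc.mpr ⟨?_, ?_⟩⟩
  · rw [Nat.add_sub_cancel]; omega
  · rw [Nat.mul_succ]; omega

variable (G k X0 W) in
def powerStrategy (n : ℕ) : Set V :=
  ballSet G (⋃ j ∈ Finset.Ioc (k * (n - 1)) (k * n), W j) k \ fireSet G 1 X0 W (k * n)

lemma mem_fireSet_mul_succ (hW : ∀ n, Disjoint (fireSet G 1 X0 W n) (W (n + 1))) (hk : 0 < k)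
    {n : ℕ} {u v : V} (hu : u ∈ fireSet G 1 X0 W (k * n)) (p : G.Walk u v) (hp : p.length ≤ k)
    (hv : ∀ i, 1 ≤ i → i ≤ n + 1 → v ∉ powerStrategy G k X0 W i) :
    v ∈ fireSet G 1 X0 W (k * (n + 1)) := by
  classical
  by_cases hhit : ∃ w ∈ p.support, ∃ j, 1 ≤ j ∧ j ≤ k * (n + 1) ∧ w ∈ W j
  · obtain ⟨w, hw, j, hj, hjn, hwj⟩ := hhit
    obtain ⟨i, hi, hin, hji⟩ := exists_mem_Ioc_mul hk hj hjn
    have hball : v ∈ ballSet G (⋃ j ∈ Finset.Ioc (k * (i - 1)) (k * i), W j) k :=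
      ⟨w, Set.mem_biUnion hji hwj, p.dropUntil w hw, (p.length_dropUntil_le_length hw).trans hp⟩
    have hvi : v ∈ fireSet G 1 X0 W (k * i) := by_contra fun h => hv i hi hin ⟨hball, h⟩
    exact fireSet_mono hW (Nat.mul_le_mul_left k hin) hvi
  · push Not at hhit
    have hlen : k * n + p.length ≤ k * (n + 1) := by rw [Nat.mul_succ]; omega
    exact fireSet_mono hW hlen <|
      mem_fireSet_add_length p hu fun w hw i hi hin => hhit w hw i hi (hin.trans hlen)

lemma fireSet_powerGraph_subset (hW : ∀ n, Disjoint (fireSet G 1 X0 W n) (W (n + 1)))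
    (hk : 0 < k) (n : ℕ) :
    fireSet (powerGraph G k) 1 X0 (powerStrategy G k X0 W) n ⊆ fireSet G 1 X0 W (k * n) := by
  induction n with
  | zero => exact subset_rfl
  | succ n ih =>
    intro v hv
    obtain ⟨u, hu, p, hp, hpW⟩ := mem_fireSet_succ.mp hv
    have hv' := fun i => hpW v p.end_mem_support i
    rcases Nat.le_one_iff_eq_zero_or_eq_one.mp hp with h0 | h1
    · rw [← Walk.eq_of_length_eq_zero h0]
      exact fireSet_mono hW (Nat.mul_le_mul_left k n.le_succ) (ih hu)
    · obtain ⟨-, hreach, hdist⟩ := Walk.adj_of_length_eq_one h1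
      obtain ⟨q, hq⟩ := hreach.exists_walk_length_eq_dist
      exact mem_fireSet_mul_succ hW hk (ih hu) q (hq ▸ hdist) hv'

lemma powerStrategy_finite_and_ncard_le {D : ℕ} {f : ℕ → ℕ}
    (hD : ∀ v, (G.neighborSet v).Finite ∧ (G.neighborSet v).ncard ≤ D)
    (hWf : ∀ n, 1 ≤ n → (W n).Finite ∧ (W n).ncard ≤ f n) (hf : Monotone f)
    {n : ℕ} (hn : 1 ≤ n) :
    (powerStrategy G k X0 W n).Finite ∧
      (powerStrategy G k X0 W n).ncard ≤ (D + 1) ^ k * (k * f (k * n)) := by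
  set B := ⋃ j ∈ Finset.Ioc (k * (n - 1)) (k * n), W j
  have hWj : ∀ j ∈ Finset.Ioc (k * (n - 1)) (k * n), (W j).Finite ∧ (W j).ncard ≤ f (k * n) :=
    fun j hj => have ⟨hj1, hj2⟩ := Finset.mem_Ioc.mp hj
      ⟨(hWf j (by omega)).1, (hWf j (by omega)).2.trans (hf hj2)⟩
  have hBfin : B.Finite := Set.Finite.biUnion (Finset.finite_toSet _) fun j hj => (hWj j hj).1
  have hBcard : B.ncard ≤ k * f (k * n) := by
    calc B.ncard ≤ ∑ j ∈ Finset.Ioc (k * (n - 1)) (k * n), (W j).ncard :=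
          Finset.set_ncard_biUnion_le _ _
      _ ≤ (Finset.Ioc (k * (n - 1)) (k * n)).card * f (k * n) :=
          Finset.sum_le_card_nsmul _ _ _ fun j hj => (hWj j hj).2
      _ = k * f (k * n) := by
          rw [Nat.card_Ioc, ← Nat.mul_sub, Nat.sub_sub_self hn, mul_one]
  have hballfin := finite_ballSet (fun v => (hD v).1) hBfin k
  refine ⟨hballfin.subset Set.sdiff_subset, ?_⟩
  calc (powerStrategy G k X0 W n).ncard ≤ (ballSet G B k).ncard :=
        Set.ncard_le_ncard Set.sdiff_subset hballfin
    _ ≤ (D + 1) ^ k * B.ncard := ncard_ballSet_le hD hBfin k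
    _ ≤ (D + 1) ^ k * (k * f (k * n)) := Nat.mul_le_mul_left _ hBcard

lemma hasContainmentProperty_powerGraph {D : ℕ} {f : ℕ → ℕ}
    (hD : ∀ v, (G.neighborSet v).Finite ∧ (G.neighborSet v).ncard ≤ D) (hf : Monotone f)
    (hk : 0 < k) (h : HasContainmentProperty G 1 f) :
    HasContainmentProperty (powerGraph G k) 1 (fun n => (D + 1) ^ k * (k * f (k * n))) := by
  intro X0 hX0
  obtain ⟨W, hWf, hW, N, -, hN⟩ := h X0 hX0
  have hsub := fireSet_powerGraph_subset hW hk
  have hW' : ∀ n, Disjoint (fireSet (powerGraph G k) 1 X0 (powerStrategy G k X0 W) n)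
      (powerStrategy G k X0 W (n + 1)) := fun n =>
    Set.disjoint_left.mpr fun v hv hv' =>
      hv'.2 (fireSet_mono hW (Nat.mul_le_mul_left k n.le_succ) (hsub n hv))
  have hbound : ∀ m, fireSet G 1 X0 W m ⊆ fireSet G 1 X0 W N := fun m =>
    (le_total m N).elim (fun hm => fireSet_mono hW hm) fun hm => (hN m hm).le
  refine ⟨powerStrategy G k X0 W, fun n hn => powerStrategy_finite_and_ncard_le hD hWf hf hn,
    hW', exists_fireSet_stable hW' (finite_fireSet (fun v => (hD v).1) hX0 N) fun n =>
      (hsub n).trans (hbound _)⟩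

end PowerGraph

/-- a bounded degree graph `G` has the `O(n^d)`-containment property iff `G(k)` has
the `O(n^d)`-containment property for every `k ≥ 1`. -/
theorem stmt6 {V : Type*} (G : SimpleGraph V) (hG : BoundedDegree G) (d : ℕ) :
    (∃ c : ℕ, 1 ≤ c ∧ HasContainmentProperty G 1 (fun n => c * n ^ d)) ↔
    (∀ k : ℕ, 1 ≤ k →
      ∃ c : ℕ, 1 ≤ c ∧ HasContainmentProperty (powerGraph G k) 1 (fun n => c * n ^ d)) := by
  obtain ⟨D, hD⟩ := hG
  refine ⟨fun ⟨c, hc, h⟩ k hk => ?_, fun h => by simpa only [powerGraph_one] using h 1 le_rfl⟩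
  refine ⟨(D + 1) ^ k * (k * (c * k ^ d)), Nat.one_le_iff_ne_zero.mpr (by positivity),
    (hasContainmentProperty_powerGraph hD ?_ hk h).mono fun n => le_of_eq (by ring)⟩
  exact fun a b hab => Nat.mul_le_mul_left c (Nat.pow_le_pow_left hab d)

end Firefighter
end
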